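/- arXiv:1410.3610 — 5 statements merged into one kernel-verified Lean document; each statement's English description precedes it below -/
import Mathlib

section
/- Let (g, Ω) be a symplectic Lie algebra and let h be an ideal of g. Then the Ω-orthogonal complement h^⊥ is an ideal of g if and only if [h^⊥, h] = 0. -/
/-- In a symplectic Lie algebra `(g, Ω)`, the orthogonal complement `h^⊥` of an ideal `h`
is an ideal of `g` if and only if `[h^⊥, h] = 0`. -/
theorem orthogonal_ideal_iff_bracket_vanishes
    {g : Type*} [LieRing g] [LieAlgebra ℝ g] [Module.Finite ℝ g]
    (Ω : g →ₗ[ℝ] g →ₗ[ℝ] ℝ)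
    (halt : ∀ x : g, Ω x x = 0)
    (hnondeg : ∀ x : g, (∀ y : g, Ω x y = 0) → x = 0)
    (hclosed : ∀ x y z : g, Ω ⁅x, y⁆ z + Ω ⁅y, z⁆ x + Ω ⁅z, x⁆ y = 0)
    (h : LieIdeal ℝ g) :
    (∀ w x : g, (∀ z ∈ h, Ω x z = 0) → ∀ z ∈ h, Ω ⁅w, x⁆ z = 0) ↔
      (∀ x : g, (∀ z ∈ h, Ω x z = 0) → ∀ y ∈ h, ⁅x, y⁆ = 0) := by
  have skew : ∀ a b : g, Ω a b = -Ω b a := by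
    intro a b
    have := halt (a + b)
    simp only [map_add, LinearMap.add_apply, halt] at this
    linarith
  have mem_rev : ∀ {a b : g}, a ∈ h → ⁅a, b⁆ ∈ h := by
    intro a b ha
    have : (⁅a, b⁆ : g) = -⁅b, a⁆ := by rw [← lie_skew]
    rw [this]
    exact neg_mem (h.lie_mem ha)
  constructor
  · intro hid x hx y hy
    apply hnondeg
    intro w
    have hc := hclosed x y w
    have h1 : Ω ⁅y, w⁆ x = 0 := by
      rw [skew]
      rw [hx _ (mem_rev hy)]
      simp
    have h2 : Ω ⁅w, x⁆ y = 0 := hid w x hx y hy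
    linarith
  · intro hab w x hx z hz
    have hc := hclosed w x z
    have h1 : Ω ⁅x, z⁆ w = 0 := by rw [hab x hx z hz]; simp
    have h2 : Ω ⁅z, w⁆ x = 0 := by
      rw [skew, hx _ (mem_rev hz)]
      simp
    linarith
end

section
/- Let g be a Lie algebra with an integrable complex structure J (i.e. [JX,JY] = [X,Y] + J[JX,Y] + J[X,JY] for all X,Y) and a closed 2-form Ω taming J. Let span(X) be a 1-dimensional ideal of g, and let Y ∈ g satisfy Ω(Y,X) = Ω(JY,X) = 0. Write [X,Y] = aX and [X,JY] = bX. Then [JX,Y] = -2bX - aJX + Z₁ and [JX,JY] = 2aX - bJX + JZ₁ for some Z₁ ∈ g with Ω(Z₁,X) = Ω(JZ₁,X) = 0. -/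
/-- With `span X` a 1-dimensional ideal, `J` integrable, `Ω` closed and taming `J`, and
`Y` with `Ω(Y,X) = Ω(JY,X) = 0`, `[X,Y] = aX`, `[X,JY] = bX`, the remaining brackets are
`[JX,Y] = -2bX - aJX + Z₁` and `[JX,JY] = 2aX - bJX + JZ₁` with `Ω(Z₁,X) = Ω(JZ₁,X) = 0`. -/
theorem bracket_relations_with_JX
    {g : Type*} [LieRing g] [LieAlgebra ℝ g] [Module.Finite ℝ g]
    (Ω : g →ₗ[ℝ] g →ₗ[ℝ] ℝ) (J : g →ₗ[ℝ] g)
    (halt : ∀ x : g, Ω x x = 0)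
    (hclosed : ∀ x y z : g, Ω ⁅x, y⁆ z + Ω ⁅y, z⁆ x + Ω ⁅z, x⁆ y = 0)
    (hJ : ∀ x : g, J (J x) = -x)
    (hint : ∀ x y : g, ⁅J x, J y⁆ = ⁅x, y⁆ + J ⁅J x, y⁆ + J ⁅x, J y⁆)
    (htame : ∀ x : g, x ≠ 0 → 0 < Ω x (J x))
    (X : g) (hX : X ≠ 0)
    (hideal : ∀ w : g, ∃ t : ℝ, ⁅X, w⁆ = t • X)
    (Y : g) (hY : Ω Y X = 0) (hJY : Ω (J Y) X = 0)
    (a b : ℝ)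
    (hXY : ⁅X, Y⁆ = a • X) (hXJY : ⁅X, J Y⁆ = b • X) :
    ∃ Z₁ : g, ⁅J X, Y⁆ = -(2 * b) • X - a • J X + Z₁ ∧
      ⁅J X, J Y⁆ = (2 * a) • X - b • J X + J Z₁ ∧
      Ω Z₁ X = 0 ∧ Ω (J Z₁) X = 0 := by
  obtain ⟨s, hs⟩ := hideal (J X)
  have hskew : ∀ u v : g, Ω u v = -Ω v u := by
    intro u v
    have h := halt (u + v)
    simp only [map_add, LinearMap.add_apply] at h
    have hu := halt u; have hv := halt v
    linarith
  have hXY0 : Ω X Y = 0 := by rw [hskew, hY, neg_zero]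
  have hXJY0 : Ω X (J Y) = 0 := by rw [hskew, hJY, neg_zero]
  set P := ⁅J X, Y⁆ with hP
  have e1 : ⁅Y, J X⁆ = -P := (lie_skew _ _).symm
  have e2 : ⁅J X, X⁆ = -(s • X) := by rw [← lie_skew, hs]
  have e3 : ⁅J Y, J X⁆ = -⁅J X, J Y⁆ := (lie_skew _ _).symm
  have h1 : Ω P X = a * Ω X (J X) := by
    have hc1 := hclosed X Y (J X)
    rw [hXY, e1, e2] at hc1
    simp only [map_smul, map_neg, LinearMap.neg_apply, LinearMap.smul_apply,
      smul_eq_mul, hXY0, mul_zero] at hc1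
    linarith
  have h2 : Ω ⁅J X, J Y⁆ X = b * Ω X (J X) := by
    have hc2 := hclosed X (J Y) (J X)
    rw [hXJY, e3, e2] at hc2
    simp only [map_smul, map_neg, LinearMap.neg_apply, LinearMap.smul_apply,
      smul_eq_mul, hXJY0, mul_zero] at hc2
    linarith
  have hQ : ⁅J X, J Y⁆ = a • X + J P + b • J X := by
    rw [hint X Y, hXY, hXJY, map_smul]
  have hJPX : Ω (J P) X = b * Ω X (J X) - a * Ω X X - b * Ω (J X) X := by
    have := congrArg (fun z => Ω z X) hQ
    simp only [map_add, map_smul, LinearMap.add_apply, LinearMap.smul_apply,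
      smul_eq_mul] at this
    rw [h2] at this
    linarith
  refine ⟨P + (2 * b) • X + a • J X, by module, ?_, ?_, ?_⟩
  · rw [hQ]
    simp only [map_add, map_smul, hJ]
    module
  · simp only [map_add, LinearMap.add_apply, map_smul, LinearMap.smul_apply,
      smul_eq_mul, h1, halt]
    have h := hskew X (J X)
    linear_combination a * h
  · simp only [map_add, map_smul, LinearMap.add_apply, LinearMap.smul_apply,
      smul_eq_mul, hJ, hJPX]
    have hXX := halt X
    have h := hskew (J X) X
    simp only [map_neg, LinearMap.neg_apply]
    linear_combination b * h - 2 * a * hXX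
end

section
/- Let (g, Ω) be a symplectic Lie algebra and h an ideal of g that is isotropic for Ω. Then h ⊆ h^⊥, the orthogonal complement h^⊥ is a Lie subalgebra containing h as an ideal, and Ω descends to a well-defined nondegenerate closed 2-form on the quotient Lie algebra h^⊥/h. -/
/-!
Alternation makes `Ω` reflexive, so orthogonality to `h` may be tested on either side. The
cyclic identity for `⁅x, y⁆, z` with `z ∈ h` pairs `x` and `y` with brackets lying in the ideal
`h`, so `h^⊥` is closed under the bracket. Nondegeneracy on `h^⊥/h` is the finite-dimensional
identity `(h^⊥)^⊥ = h`.
-/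

open LinearMap (BilinForm)

namespace LinearMap.BilinForm

/-- Closedness of a 2-form on a Lie algebra, i.e. the Chevalley–Eilenberg cocycle condition. -/
def IsClosedForm {R L : Type*} [CommRing R] [LieRing L] [LieAlgebra R L]
    (B : BilinForm R L) : Prop :=
  ∀ x y z : L, B ⁅x, y⁆ z + B ⁅y, z⁆ x + B ⁅z, x⁆ y = 0

theorem IsClosedForm.apply_lie_eq_zero {R L : Type*} [CommRing R] [LieRing L]
    [LieAlgebra R L] {B : BilinForm R L} (hB : B.IsClosedForm) (hrefl : IsRefl B)
    (I : LieIdeal R L) {x y z : L} (hx : ∀ w ∈ I, B x w = 0) (hy : ∀ w ∈ I, B y w = 0)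
    (hz : z ∈ I) : B ⁅x, y⁆ z = 0 := by
  have hyz : B ⁅y, z⁆ x = 0 := hrefl _ _ (hx _ (I.lie_mem hz))
  have hzx : B ⁅z, x⁆ y = 0 := hrefl _ _ (hy _ (lie_mem_left R L I z x hz))
  linear_combination hB x y z - hyz - hzx

end LinearMap.BilinForm

namespace LinearMap

theorem IsRefl.apply_eq_apply_of_sub_mem {R M : Type*} [CommRing R] [AddCommGroup M]
    [Module R M] {B : BilinForm R M} (hB : IsRefl B) {N : Submodule R M} {x x' y y' : M}
    (hx' : ∀ z ∈ N, B x' z = 0) (hy : ∀ z ∈ N, B y z = 0) (hxx' : x - x' ∈ N)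
    (hyy' : y - y' ∈ N) : B x y = B x' y' := by
  have hleft : B (x - x') y = 0 := hB _ _ (hy _ hxx')
  have hright : B x' (y - y') = 0 := hx' _ hyy'
  rw [map_sub, sub_apply, sub_eq_zero] at hleft
  rw [map_sub, sub_eq_zero] at hright
  exact hleft.trans hright

theorem IsRefl.mem_of_forall_apply_eq_zero {K V : Type*} [Field K] [AddCommGroup V]
    [Module K V] [FiniteDimensional K V] {B : BilinForm K V} (hB : IsRefl B)
    (hsep : SeparatingLeft B) (N : Submodule K V) {x : V}
    (hx : ∀ y : V, (∀ z ∈ N, B y z = 0) → B x y = 0) : x ∈ N := by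
  rw [← BilinForm.orthogonal_orthogonal (hB.nondegenerate_iff_separatingLeft.mpr hsep) hB N]
  exact fun y hy => hB _ _ (hx y fun z hz => hB _ _ (hy z hz))

end LinearMap

/-- For an isotropic ideal `h` of a symplectic Lie algebra `(g,Ω)`: `h ⊆ h^⊥`, `h^⊥` is a
subalgebra containing `h` as an ideal, and `Ω` descends to a well-defined nondegenerate
closed 2-form on the quotient `h^⊥/h`. -/
theorem symplectic_reduction
    {g : Type*} [LieRing g] [LieAlgebra ℝ g] [Module.Finite ℝ g]
    (Ω : g →ₗ[ℝ] g →ₗ[ℝ] ℝ)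
    (halt : ∀ x : g, Ω x x = 0)
    (hnondeg : ∀ x : g, (∀ y : g, Ω x y = 0) → x = 0)
    (hclosed : ∀ x y z : g, Ω ⁅x, y⁆ z + Ω ⁅y, z⁆ x + Ω ⁅z, x⁆ y = 0)
    (h : LieIdeal ℝ g)
    (hiso : ∀ x ∈ h, ∀ y ∈ h, Ω x y = 0) :
    -- h ⊆ h^⊥
    (∀ x ∈ h, ∀ y ∈ h, Ω x y = 0) ∧
    -- h^⊥ is a Lie subalgebra
    (∀ x y : g, (∀ z ∈ h, Ω x z = 0) → (∀ z ∈ h, Ω y z = 0) →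
      ∀ z ∈ h, Ω ⁅x, y⁆ z = 0) ∧
    -- h is an ideal of h^⊥
    (∀ x : g, (∀ z ∈ h, Ω x z = 0) → ∀ y ∈ h, ⁅x, y⁆ ∈ h) ∧
    -- the induced form on h^⊥/h is well defined
    (∀ x x' y y' : g, (∀ z ∈ h, Ω x z = 0) → (∀ z ∈ h, Ω x' z = 0) →
      (∀ z ∈ h, Ω y z = 0) → (∀ z ∈ h, Ω y' z = 0) →
      x - x' ∈ h → y - y' ∈ h → Ω x y = Ω x' y') ∧
    -- the induced form is nondegenerate on the quotient
    (∀ x : g, (∀ z ∈ h, Ω x z = 0) →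
      (∀ y : g, (∀ z ∈ h, Ω y z = 0) → Ω x y = 0) → x ∈ h) ∧
    -- the induced form is closed
    (∀ x y z : g, (∀ w ∈ h, Ω x w = 0) → (∀ w ∈ h, Ω y w = 0) → (∀ w ∈ h, Ω z w = 0) →
      Ω ⁅x, y⁆ z + Ω ⁅y, z⁆ x + Ω ⁅z, x⁆ y = 0) := by
  have hrefl : Ω.IsRefl := LinearMap.IsAlt.isRefl halt
  have hΩ : BilinForm.IsClosedForm Ω := hclosed
  refine ⟨hiso, ?_, ?_, ?_, ?_, fun x y z _ _ _ => hclosed x y z⟩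
  · exact fun x y hx hy z hz => hΩ.apply_lie_eq_zero hrefl h hx hy hz
  · exact fun x _ y hy => h.lie_mem hy
  · exact fun x x' y y' _ hx' hy _ => hrefl.apply_eq_apply_of_sub_mem hx' hy
  · exact fun x _ hx => hrefl.mem_of_forall_apply_eq_zero hnondeg h hx
end

section
/- Let g be a completely solvable Lie algebra with a closed 2-form Ω taming an integrable complex structure J, and let h = span(X) be a 1-dimensional isotropic ideal. Then the quotient Lie algebra h^⊥/h carries an induced complex structure J̃, defined by J̃(Y + h) = JY + h when JY ∈ h^⊥ (and via the correction Y ↦ Y - (Ω(JY,X)/Ω(JX,X))X otherwise), and the induced 2-form Ω̃ on h^⊥/h is closed and tames J̃. -/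
/-!
Subtracting the right multiple of `X` from `Y` makes `Ω (J ·) X` vanish, so `J` of the corrected
representative lies in `h^⊥`. On `h^⊥` no correction is needed a second time, hence `J̃² = -1`
modulo `h`. Since `Ω X` vanishes on `J` of the corrected representative, `Ω (Y, J̃ Y)` equals
`Ω (Y', J Y')` for the corrected representative `Y' ≠ 0`, which is positive.
-/

theorem LinearMap.apply_sub_div_smul_eq_zero {K V : Type*} [Field K] [AddCommGroup V]
    [Module K V] (φ : V →ₗ[K] K) {X : V} (hX : φ X ≠ 0) (Y : V) :
    φ (Y - (φ Y / φ X) • X) = 0 := by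
  rw [map_sub, map_smul, smul_eq_mul, div_mul_cancel₀ _ hX, sub_self]

section QuotientComplexLift

variable {K V : Type*} [Field K] [AddCommGroup V] [Module K V]
  {Ω : V →ₗ[K] V →ₗ[K] K} {J : V →ₗ[K] V} {X : V}

variable (Ω J X) in
/-- `J̃ (Y + span {X}) = quotientComplexLift Ω J X Y + span {X}`. -/
def quotientComplexLift (Y : V) : V :=
  J (Y - (Ω (J Y) X / Ω (J X) X) • X)

theorem apply_quotientComplexLift_eq_zero (hc : Ω (J X) X ≠ 0) (Y : V) :
    Ω (quotientComplexLift Ω J X Y) X = 0 :=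
  (Ω.flip X ∘ₗ J).apply_sub_div_smul_eq_zero hc Y

theorem quotientComplexLift_of_apply_eq_zero {Y : V} (hY : Ω (J Y) X = 0) :
    quotientComplexLift Ω J X Y = J Y := by
  rw [quotientComplexLift, hY, zero_div, zero_smul, sub_zero]

theorem quotientComplexLift_quotientComplexLift_add_mem_span (hJ : ∀ x, J (J x) = -x)
    (halt : Ω.IsAlt) {Y : V} (hY : Ω Y X = 0) :
    quotientComplexLift Ω J X (quotientComplexLift Ω J X Y) + Y ∈ Submodule.span K {X} := by
  set c := Ω (J Y) X / Ω (J X) X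
  have hJJ : J (J (Y - c • X)) = c • X - Y := by rw [hJ]; abel
  have horth : Ω (J (quotientComplexLift Ω J X Y)) X = 0 := by
    rw [quotientComplexLift, hJJ, map_sub, map_smul, LinearMap.sub_apply,
      LinearMap.smul_apply, halt.self_eq_zero, hY, smul_zero, sub_zero]
  rw [quotientComplexLift_of_apply_eq_zero horth, quotientComplexLift, hJJ, sub_add_cancel]
  exact Submodule.smul_mem _ c (Submodule.mem_span_singleton_self X)

theorem apply_J_self_ne_zero [PartialOrder K] (halt : Ω.IsAlt)
    (htame : ∀ x, x ≠ 0 → 0 < Ω x (J x)) (hX : X ≠ 0) : Ω (J X) X ≠ 0 := by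
  rw [← halt.neg]
  exact neg_ne_zero.mpr (htame X hX).ne'

theorem pos_apply_quotientComplexLift [PartialOrder K] (halt : Ω.IsAlt)
    (htame : ∀ x, x ≠ 0 → 0 < Ω x (J x)) (hX : X ≠ 0) {Y : V}
    (hY : Y ∉ Submodule.span K {X}) :
    0 < Ω Y (quotientComplexLift Ω J X Y) := by
  have hc := apply_J_self_ne_zero halt htame hX
  set c := Ω (J Y) X / Ω (J X) X
  have hY' : Y - c • X ≠ 0 := fun h =>
    hY (Submodule.mem_span_singleton.mpr ⟨c, (sub_eq_zero.mp h).symm⟩)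
  have hXorth : Ω X (quotientComplexLift Ω J X Y) = 0 :=
    halt.eq_iff.mp (apply_quotientComplexLift_eq_zero hc Y)
  have hshift : Ω Y (quotientComplexLift Ω J X Y) = Ω (Y - c • X) (J (Y - c • X)) := by
    rw [map_sub, map_smul, LinearMap.sub_apply, LinearMap.smul_apply, ← quotientComplexLift,
      hXorth, smul_zero, sub_zero]
  exact hshift ▸ htame _ hY'

end QuotientComplexLift

theorem quotient_has_tamed_complex_structure_general
    {g : Type*} [LieRing g] [LieAlgebra ℝ g]
    (Ω : g →ₗ[ℝ] g →ₗ[ℝ] ℝ) (J : g →ₗ[ℝ] g)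
    (halt : ∀ x : g, Ω x x = 0)
    (hclosed : ∀ x y z : g, Ω ⁅x, y⁆ z + Ω ⁅y, z⁆ x + Ω ⁅z, x⁆ y = 0)
    (hJ : ∀ x : g, J (J x) = -x)
    (htame : ∀ x : g, x ≠ 0 → 0 < Ω x (J x))
    (X : g) (hX : X ≠ 0) :
    -- the corrected lift of J̃ maps h^⊥ to h^⊥
    (∀ Y : g, Ω Y X = 0 → Ω (J (Y - (Ω (J Y) X / Ω (J X) X) • X)) X = 0) ∧
    -- J̃ squares to -id on the quotient h^⊥/h
    (∀ Y : g, Ω Y X = 0 →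
      (fun W => J (W - (Ω (J W) X / Ω (J X) X) • X))
        ((fun W => J (W - (Ω (J W) X / Ω (J X) X) • X)) Y) + Y
        ∈ Submodule.span ℝ {X}) ∧
    -- the induced form Ω̃ on h^⊥/h is closed
    (∀ y z w : g, Ω y X = 0 → Ω z X = 0 → Ω w X = 0 →
      Ω ⁅y, z⁆ w + Ω ⁅z, w⁆ y + Ω ⁅w, y⁆ z = 0) ∧
    -- Ω̃ tames J̃
    (∀ Y : g, Ω Y X = 0 → Y ∉ Submodule.span ℝ {X} →
      0 < Ω Y (J (Y - (Ω (J Y) X / Ω (J X) X) • X))) := by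
  refine ⟨fun Y _ => apply_quotientComplexLift_eq_zero (apply_J_self_ne_zero halt htame hX) Y,
    fun Y hY => quotientComplexLift_quotientComplexLift_add_mem_span hJ halt hY,
    fun y z w _ _ _ => hclosed y z w,
    fun Y _ hY => pos_apply_quotientComplexLift halt htame hX hY⟩

/-- For a completely solvable Lie algebra with a closed 2-form `Ω` taming an integrable
complex structure `J` and a 1-dimensional isotropic ideal `h = span X`, the quotient
`h^⊥/h` carries an induced complex structure `J̃` (via the correction
`Y ↦ Y - (Ω(JY,X)/Ω(JX,X)) X`) tamed by the induced closed 2-form `Ω̃`. -/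
theorem quotient_has_tamed_complex_structure
    {g : Type*} [LieRing g] [LieAlgebra ℝ g] [Module.Finite ℝ g]
    (hcs : ∀ X : g, ((((LieAlgebra.ad ℝ g X : g →ₗ[ℝ] g).charpoly).map (RingHom.id ℝ)).Splits))
    (Ω : g →ₗ[ℝ] g →ₗ[ℝ] ℝ) (J : g →ₗ[ℝ] g)
    (halt : ∀ x : g, Ω x x = 0)
    (hnondeg : ∀ x : g, (∀ y : g, Ω x y = 0) → x = 0)
    (hclosed : ∀ x y z : g, Ω ⁅x, y⁆ z + Ω ⁅y, z⁆ x + Ω ⁅z, x⁆ y = 0)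
    (hJ : ∀ x : g, J (J x) = -x)
    (hint : ∀ x y : g, ⁅J x, J y⁆ = ⁅x, y⁆ + J ⁅J x, y⁆ + J ⁅x, J y⁆)
    (htame : ∀ x : g, x ≠ 0 → 0 < Ω x (J x))
    (X : g) (hX : X ≠ 0)
    (hideal : ∀ w : g, ∃ t : ℝ, ⁅w, X⁆ = t • X) :
    -- the corrected lift of J̃ maps h^⊥ to h^⊥
    (∀ Y : g, Ω Y X = 0 → Ω (J (Y - (Ω (J Y) X / Ω (J X) X) • X)) X = 0) ∧
    -- J̃ squares to -id on the quotient h^⊥/h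
    (∀ Y : g, Ω Y X = 0 →
      (fun W => J (W - (Ω (J W) X / Ω (J X) X) • X))
        ((fun W => J (W - (Ω (J W) X / Ω (J X) X) • X)) Y) + Y
        ∈ Submodule.span ℝ {X}) ∧
    -- the induced form Ω̃ on h^⊥/h is closed
    (∀ y z w : g, Ω y X = 0 → Ω z X = 0 → Ω w X = 0 →
      Ω ⁅y, z⁆ w + Ω ⁅z, w⁆ y + Ω ⁅w, y⁆ z = 0) ∧
    -- Ω̃ tames J̃
    (∀ Y : g, Ω Y X = 0 → Y ∉ Submodule.span ℝ {X} →
      0 < Ω Y (J (Y - (Ω (J Y) X / Ω (J X) X) • X))) :=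
  quotient_has_tamed_complex_structure_general Ω J halt hclosed hJ htame X hX
end

section
/- Let g be a unimodular Lie algebra with a 2-form Ω taming a complex structure J, let h = span(X) be a 1-dimensional isotropic ideal, and suppose that for every Y in a complement v of span(X, JX) with v ⊆ h^⊥ one has [X,Y] = aᵧX and that the bracket of JX with v preserves the decomposition as in the induction step. Then the quotient Lie algebra h^⊥/h is unimodular. -/
/-!
The trace of `ad_Y` on `g = v ⊕ span{X, JX}` is the sum of the traces of its compressions to
the two summands. The plane `span{X, JX}` is 2-dimensional because `Ω(X, X) = 0` while
`Ω(X, JX) > 0`, and the bracket relations make the compression of `ad_Y` to it upper triangular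
with diagonal `(-a, a)`. Its trace vanishes, so unimodularity of `g` forces the trace of the
compression to `v` to vanish.
-/

open LinearMap (trace)

theorem LinearIndependent.pair_of_apply_self_eq_zero {R M : Type*} [CommRing R] [NoZeroDivisors R]
    [AddCommGroup M] [Module R M] (Ω : M →ₗ[R] M →ₗ[R] R) {x y : M} (hx : Ω x x = 0)
    (hxy : Ω x y ≠ 0) : LinearIndependent R ![x, y] := by
  rw [LinearIndependent.pair_iff]
  intro c d hcd
  have hd : d = 0 := by
    have h := congrArg (Ω x) hcd
    simp only [map_add, map_smul, hx, smul_eq_mul, mul_zero, zero_add, map_zero] at h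
    exact (mul_eq_zero.1 h).resolve_right hxy
  subst hd
  have h := congrArg (fun z => Ω z y) hcd
  simp only [zero_smul, add_zero, map_smul, LinearMap.smul_apply, smul_eq_mul, map_zero,
    LinearMap.zero_apply] at h
  exact ⟨(mul_eq_zero.1 h).resolve_right hxy, rfl⟩

namespace Module.Basis

variable {R M : Type*} [Ring R] [AddCommGroup M] [Module R M] {x y : M}

noncomputable def spanPair (h : LinearIndependent R ![x, y]) :
    Basis (Fin 2) R (Submodule.span R {x, y}) :=
  (Basis.span h).map (LinearEquiv.ofEq _ _ (by simp [Set.pair_comm]))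

@[simp]
theorem coe_spanPair_zero (h : LinearIndependent R ![x, y]) : (spanPair h 0 : M) = x := by
  simp [spanPair, Basis.span_apply]

@[simp]
theorem coe_spanPair_one (h : LinearIndependent R ![x, y]) : (spanPair h 1 : M) = y := by
  simp [spanPair, Basis.span_apply]

end Module.Basis

theorem LinearMap.trace_eq_add_of_upperTriangular_fin_two {R N : Type*} [CommRing R]
    [AddCommGroup N] [Module R N] (e : Module.Basis (Fin 2) R N) {f : N →ₗ[R] N} {α β δ : R}
    (h₀ : f (e 0) = α • e 0) (h₁ : f (e 1) = β • e 0 + δ • e 1) :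
    trace R N f = α + δ := by
  rw [LinearMap.trace_eq_matrix_trace R e, Matrix.trace_fin_two, LinearMap.toMatrix_apply,
    LinearMap.toMatrix_apply, h₀, h₁]
  simp

theorem Submodule.projectionOnto_add_of_mem {R E : Type*} [Ring R] [AddCommGroup E] [Module R E]
    {p q : Submodule R E} (h : IsCompl p q) {x y : E} (hx : x ∈ p) (hy : y ∈ q) :
    p.projectionOnto q h (x + y) = ⟨x, hx⟩ := by
  rw [map_add, projectionOnto_apply_of_mem_left h hx, projectionOnto_apply_of_mem_right h hy,
    add_zero]

theorem LinearMap.trace_eq_add_of_isCompl {R M : Type*} [CommRing R] [AddCommGroup M]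
    [Module R M] [Module.Free R M] [Module.Finite R M] {p q : Submodule R M}
    [Module.Free R p] [Module.Finite R p] [Module.Free R q] [Module.Finite R q]
    (h : IsCompl p q) (f : M →ₗ[R] M) :
    trace R M f = trace R p (p.projectionOnto q h ∘ₗ f ∘ₗ p.subtype) +
      trace R q (q.projectionOnto p h.symm ∘ₗ f ∘ₗ q.subtype) := by
  have hf : f = (f ∘ₗ p.subtype) ∘ₗ p.projectionOnto q h +
      (f ∘ₗ q.subtype) ∘ₗ q.projectionOnto p h.symm := by
    calc f = f ∘ₗ (p.projection q h + q.projection p h.symm) := by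
          rw [Submodule.projection_add_projection_eq_id, comp_id]
      _ = _ := comp_add _ _ _
  conv_lhs => rw [hf]
  rw [map_add, trace_comp_comm' (f ∘ₗ p.subtype), trace_comp_comm' (f ∘ₗ q.subtype)]

theorem quotient_is_unimodular_general
    {g : Type*} [LieRing g] [LieAlgebra ℝ g] [Module.Finite ℝ g]
    (hunimod : ∀ W : g, LinearMap.trace ℝ g (LieAlgebra.ad ℝ g W : g →ₗ[ℝ] g) = 0)
    (Ω : g →ₗ[ℝ] g →ₗ[ℝ] ℝ) (J : g →ₗ[ℝ] g)
    (halt : ∀ x : g, Ω x x = 0)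
    (htame : ∀ x : g, x ≠ 0 → 0 < Ω x (J x))
    (X : g) (hX : X ≠ 0)
    (v : Submodule ℝ g)
    (hcompl : IsCompl v (Submodule.span ℝ {X, J X}))
    (hbrackets : ∀ Y ∈ v, ∃ a b : ℝ, ∃ Z₁ ∈ v,
      ⁅X, Y⁆ = a • X ∧ ⁅X, J Y⁆ = b • X ∧
      ⁅J X, Y⁆ = -(2 * b) • X - a • J X + Z₁ ∧
      ⁅J X, J Y⁆ = (2 * a) • X - b • J X + J Z₁) :
    ∀ Y ∈ v, LinearMap.trace ℝ v
      ((Submodule.linearProjOfIsCompl v (Submodule.span ℝ {X, J X}) hcompl) ∘ₗ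
        (LieAlgebra.ad ℝ g Y : g →ₗ[ℝ] g) ∘ₗ v.subtype) = 0 := by
  intro Y hY
  obtain ⟨a, b, Z₁, hZ₁, hXY, -, hJXY, -⟩ := hbrackets Y hY
  set s := Submodule.span ℝ {X, J X}
  set π := s.projectionOnto v hcompl.symm
  let e := Module.Basis.spanPair
    (LinearIndependent.pair_of_apply_self_eq_zero Ω (halt X) (htame X hX).ne')
  have hXs : X ∈ s := Submodule.subset_span (Set.mem_insert _ _)
  have hJXs : J X ∈ s := Submodule.subset_span (Set.mem_insert_of_mem _ rfl)
  have hX : π ⁅Y, (e 0 : g)⁆ = (-a) • e 0 := by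
    rw [Module.Basis.coe_spanPair_zero, ← lie_skew, hXY, ← neg_smul,
      Submodule.projectionOnto_apply_of_mem_left _ (s.smul_mem _ hXs)]
    ext
    simp [e]
  have hJX : π ⁅Y, (e 1 : g)⁆ = (2 * b) • e 0 + a • e 1 := by
    rw [Module.Basis.coe_spanPair_one, ← lie_skew, hJXY,
      show -(-(2 * b) • X - a • J X + Z₁) = ((2 * b) • X + a • J X) + -Z₁ by module,
      Submodule.projectionOnto_add_of_mem _ (add_mem (s.smul_mem _ hXs) (s.smul_mem _ hJXs))
        (neg_mem hZ₁)]
    ext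
    simp [e]
  have htrace_s : trace ℝ s (π ∘ₗ (LieAlgebra.ad ℝ g Y : g →ₗ[ℝ] g) ∘ₗ s.subtype) = 0 := by
    rw [LinearMap.trace_eq_add_of_upperTriangular_fin_two e hX hJX, neg_add_cancel]
  have := LinearMap.trace_eq_add_of_isCompl hcompl (LieAlgebra.ad ℝ g Y)
  rwa [hunimod, htrace_s, add_zero, eq_comm] at this

/-- Under the hypotheses of the induction step (g unimodular, `span X` a 1-dimensional
isotropic ideal, `v` a `J`-invariant complement of `span{X, JX}` inside `h^⊥` with the
stated bracket relations), the quotient Lie algebra `h^⊥/h ≅ v` is unimodular: for every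
`Y ∈ v` the trace of the induced endomorphism of `v` given by `ad_Y` vanishes. -/
theorem quotient_is_unimodular
    {g : Type*} [LieRing g] [LieAlgebra ℝ g] [Module.Finite ℝ g]
    (hunimod : ∀ W : g, LinearMap.trace ℝ g (LieAlgebra.ad ℝ g W : g →ₗ[ℝ] g) = 0)
    (Ω : g →ₗ[ℝ] g →ₗ[ℝ] ℝ) (J : g →ₗ[ℝ] g)
    (halt : ∀ x : g, Ω x x = 0)
    (hJ : ∀ x : g, J (J x) = -x)
    (htame : ∀ x : g, x ≠ 0 → 0 < Ω x (J x))
    (X : g) (hX : X ≠ 0)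
    (hideal : ∀ w : g, ∃ t : ℝ, ⁅w, X⁆ = t • X)
    (v : Submodule ℝ g)
    (hvperp : ∀ Y ∈ v, Ω Y X = 0)
    (hJv : ∀ Y ∈ v, J Y ∈ v)
    (hcompl : IsCompl v (Submodule.span ℝ {X, J X}))
    (hbrackets : ∀ Y ∈ v, ∃ a b : ℝ, ∃ Z₁ ∈ v,
      ⁅X, Y⁆ = a • X ∧ ⁅X, J Y⁆ = b • X ∧
      ⁅J X, Y⁆ = -(2 * b) • X - a • J X + Z₁ ∧
      ⁅J X, J Y⁆ = (2 * a) • X - b • J X + J Z₁) :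
    ∀ Y ∈ v, LinearMap.trace ℝ v
      ((Submodule.linearProjOfIsCompl v (Submodule.span ℝ {X, J X}) hcompl) ∘ₗ
        (LieAlgebra.ad ℝ g Y : g →ₗ[ℝ] g) ∘ₗ v.subtype) = 0 :=
  quotient_is_unimodular_general hunimod Ω J halt htame X hX v hcompl hbrackets
end
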